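/- Define r : [1/2, 1] → ℝ by r(d) = √(6d + 10)/√(−1 − 3d + √(1 + 222d + 225d²)). Then r is well defined (the quantity −1 − 3d + √(1 + 222d + 225d²) is strictly positive on [1/2,1]), strictly decreasing on [1/2, 1], and hence a bijection from [1/2, 1] onto [r(1), r(1/2)]; moreover r(1) = 2/√(2√7 − 1). -/

import Mathlib

noncomputable section

/-- The frequency ratio `r(d) = √(6d + 10)/√(−1 − 3d + √(1 + 222d + 225d²))` at the
equilibrium `L₁` of the spatial Hill four-body problem. -/
def rfun (d : ℝ) : ℝ :=
  Real.sqrt (6*d + 10) / Real.sqrt (-1 - 3*d + Real.sqrt (1 + 222*d + 225*d^2))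

/-!
Write `S = √(1 + 222d + 225d²)` and `D = S − 1 − 3d`. Since `S² − (1 + 3d)² = 216d(d + 1)`,
`D > 0` for `d > 0`, and there `r = √(r²)` with `r² = (6d + 10)/D`. A direct computation gives
`(r²)' = 24(S − 66d − 46)/(S D²)`, which is negative because `S² < (66d + 46)²`. So `r` is
continuous and strictly decreasing on `(0, ∞)`, and the intermediate value theorem makes it a
bijection `[1/2, 1] → [r(1), r(1/2)]`. Finally `√448 = 8√7` gives `r(1)`.
-/

open Real Set

theorem StrictAntiOn.bijOn_Icc {α δ : Type*} [ConditionallyCompleteLinearOrder α]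
    [TopologicalSpace α] [OrderTopology α] [DenselyOrdered α] [LinearOrder δ]
    [TopologicalSpace δ] [OrderClosedTopology δ] {f : α → δ} {a b : α} (hab : a ≤ b)
    (hf : StrictAntiOn f (Icc a b)) (hc : ContinuousOn f (Icc a b)) :
    BijOn f (Icc a b) (Icc (f b) (f a)) :=
  ⟨hf.antitoneOn.mapsTo_Icc, hf.injOn, hc.surjOn_Icc (right_mem_Icc.2 hab) (left_mem_Icc.2 hab)⟩

def rfunDenom (d : ℝ) : ℝ := -1 - 3*d + √(1 + 222*d + 225*d^2)

def rfunSq (d : ℝ) : ℝ := (6*d + 10) / rfunDenom d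

lemma one_add_three_mul_lt_sqrt {d : ℝ} (hd : 0 < d) : 1 + 3*d < √(1 + 222*d + 225*d^2) :=
  (lt_sqrt (by positivity)).2 (by nlinarith)

lemma sqrt_lt_sixtySix_mul_add {d : ℝ} (hd : 0 ≤ d) : √(1 + 222*d + 225*d^2) < 66*d + 46 :=
  (sqrt_lt' (by positivity)).2 (by nlinarith)

lemma rfunDenom_pos {d : ℝ} (hd : 0 < d) : 0 < rfunDenom d := by
  have := one_add_three_mul_lt_sqrt hd
  unfold rfunDenom
  linarith

lemma rfunSq_pos {d : ℝ} (hd : 0 < d) : 0 < rfunSq d :=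
  div_pos (by linarith) (rfunDenom_pos hd)

lemma rfun_eq_sqrt_rfunSq {d : ℝ} (hd : -5/3 ≤ d) : rfun d = √(rfunSq d) :=
  (sqrt_div (by linarith) _).symm

lemma hasDerivAt_rfunSq {d : ℝ} (hd : 0 < d) :
    HasDerivAt rfunSq (24 * (√(1 + 222*d + 225*d^2) - 66*d - 46) /
      (√(1 + 222*d + 225*d^2) * rfunDenom d ^ 2)) d := by
  have hX : 0 < 1 + 222*d + 225*d^2 := by positivity
  have hS : HasDerivAt (fun x => √(1 + 222*x + 225*x^2))
      ((222 + 450*d) / (2 * √(1 + 222*d + 225*d^2))) d :=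
    HasDerivAt.sqrt ((((hasDerivAt_id' d).const_mul 222).const_add 1 |>.add
      ((hasDerivAt_pow 2 d).const_mul 225)).congr_deriv (by ring)) hX.ne'
  have hD : HasDerivAt rfunDenom (-3 + (222 + 450*d) / (2 * √(1 + 222*d + 225*d^2))) d :=
    ((((hasDerivAt_id' d).const_mul 3).const_sub (-1)).add hS).congr_deriv (by ring)
  refine (((hasDerivAt_id' d).const_mul 6).add_const 10 |>.div hD
    (rfunDenom_pos hd).ne').congr_deriv ?_
  have hD_ne := (rfunDenom_pos hd).ne'
  rw [rfunDenom] at hD_ne ⊢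
  set S := √(1 + 222*d + 225*d^2)
  have hS_pos : 0 < S := sqrt_pos.2 hX
  have hS_sq : S ^ 2 = 1 + 222*d + 225*d^2 := sq_sqrt hX.le
  field_simp
  linear_combination 12 * hS_sq

lemma rfunSq_strictAntiOn : StrictAntiOn rfunSq (Ioi 0) := by
  refine strictAntiOn_of_deriv_neg (convex_Ioi 0)
    (fun d hd => (hasDerivAt_rfunSq hd).continuousAt.continuousWithinAt) fun d hd => ?_
  rw [interior_Ioi, mem_Ioi] at hd
  have hS_pos : 0 < √(1 + 222*d + 225*d^2) := sqrt_pos.2 (by positivity)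
  rw [(hasDerivAt_rfunSq hd).deriv]
  exact div_neg_of_neg_of_pos (by linarith [sqrt_lt_sixtySix_mul_add hd.le])
    (mul_pos hS_pos (pow_pos (rfunDenom_pos hd) 2))

lemma rfun_strictAntiOn : StrictAntiOn rfun (Ioi 0) :=
  fun a (ha : 0 < a) b (hb : 0 < b) hab => by
    rw [rfun_eq_sqrt_rfunSq (by linarith), rfun_eq_sqrt_rfunSq (by linarith)]
    exact sqrt_lt_sqrt (rfunSq_pos hb).le (rfunSq_strictAntiOn ha hb hab)

lemma rfun_continuousOn : ContinuousOn rfun (Ioi 0) := by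
  refine ContinuousOn.congr (fun d hd => ?_) fun d (hd : 0 < d) =>
    rfun_eq_sqrt_rfunSq (by linarith)
  exact continuous_sqrt.continuousAt.comp_continuousWithinAt
    (hasDerivAt_rfunSq hd).continuousAt.continuousWithinAt

lemma rfun_one : rfun 1 = 2 / √(2 * √7 - 1) := by
  have hD : -1 - 3*1 + √(1 + 222*1 + 225*1^2) = (2 : ℝ)^2 * (2 * √7 - 1) := by
    rw [show (1 : ℝ) + 222*1 + 225*1^2 = 8^2 * 7 by norm_num, sqrt_mul (by norm_num),
      sqrt_sq (by norm_num)]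
    ring
  rw [rfun, hD, sqrt_mul (by norm_num), sqrt_sq (by norm_num),
    show (6 : ℝ) * 1 + 10 = 4^2 by norm_num, sqrt_sq (by norm_num)]
  ring

/-- On `[1/2, 1]` the quantity `−1 − 3d + √(1 + 222d + 225d²)` is strictly positive (so `r`
is well defined), `r` is strictly decreasing, hence a bijection from `[1/2, 1]` onto
`[r(1), r(1/2)]`; moreover `r(1) = 2/√(2√7 − 1)`. -/
theorem rfun_bijection :
    (∀ d ∈ Set.Icc (1/2 : ℝ) 1, 0 < -1 - 3*d + Real.sqrt (1 + 222*d + 225*d^2)) ∧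
    StrictAntiOn rfun (Set.Icc (1/2 : ℝ) 1) ∧
    Set.BijOn rfun (Set.Icc (1/2 : ℝ) 1) (Set.Icc (rfun 1) (rfun (1/2))) ∧
    rfun 1 = 2 / Real.sqrt (2 * Real.sqrt 7 - 1) := by
  have hIcc : Icc (1/2 : ℝ) 1 ⊆ Ioi 0 := fun d hd => lt_of_lt_of_le (by norm_num) hd.1
  have hanti := rfun_strictAntiOn.mono hIcc
  exact ⟨fun d hd => rfunDenom_pos (hIcc hd), hanti,
    hanti.bijOn_Icc (by norm_num) (rfun_continuousOn.mono hIcc), rfun_one⟩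

end
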